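/- arXiv:2012.08913 — 3 statements merged into one kernel-verified Lean document; each statement's English description precedes it below -/
import Mathlib

section
/- Let d ≥ 3 be an integer, λ = 2^{1/d}, and let Q(t) = Σ_{j=3}^{d} a_j t^j with real coefficients. Let C ≥ 10d, let k ∈ {3,…,d} with a_k ≠ 0, and let l ∈ ℤ be such that |a_j| λ^{jl} ≤ 2^{−C} |a_k| λ^{kl} for every j ∈ {3,…,d} with j ≠ k. Then for every t ∈ ℝ with λ^{l−2} ≤ |t| ≤ λ^{l+1}, one has (1/2)(1 − d·2^{−C}) |a_k| |t|^k ≤ |Q(t)| ≤ 2(1 + d·2^{−C}) |a_k| |t|^k. -/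
open scoped ENNReal

/-- **Good-scale monomial domination.** Let `d ≥ 3`, `λ = 2^{1/d}`, `Q(t) = Σ_{j=3}^d a_j t^j`,
`C ≥ 10d`, and let `k ∈ {3,…,d}` with `a_k ≠ 0`. If `l ∈ ℤ` is a scale on which the `k`-th
coefficient dominates, i.e. `|a_j| λ^{jl} ≤ 2^{-C} |a_k| λ^{kl}` for all `j ≠ k` in `{3,…,d}`,
then on the annulus `λ^{l-2} ≤ |t| ≤ λ^{l+1}` the polynomial `Q` is comparable to its dominant
monomial: `(1/2)(1 - d·2^{-C}) |a_k||t|^k ≤ |Q(t)| ≤ 2(1 + d·2^{-C}) |a_k||t|^k`. -/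
theorem statement7 (d : ℕ) (hd : 3 ≤ d) (lam : ℝ) (hlam : lam = (2 : ℝ) ^ ((d : ℝ)⁻¹))
    (a : ℕ → ℝ) (Q : ℝ → ℝ) (hQ : ∀ t, Q t = ∑ j ∈ Finset.Icc 3 d, a j * t ^ j)
    (C : ℝ) (hC : 10 * (d : ℝ) ≤ C)
    (k : ℕ) (hk : k ∈ Finset.Icc 3 d) (hak : a k ≠ 0)
    (l : ℤ)
    (hdom : ∀ j ∈ Finset.Icc 3 d, j ≠ k →
      |a j| * lam ^ ((j : ℤ) * l) ≤ (2 : ℝ) ^ (-C) * |a k| * lam ^ ((k : ℤ) * l))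
    (t : ℝ) (ht : lam ^ (l - 2) ≤ |t| ∧ |t| ≤ lam ^ (l + 1)) :
    (1 / 2) * (1 - (d : ℝ) * (2 : ℝ) ^ (-C)) * |a k| * |t| ^ k ≤ |Q t| ∧
      |Q t| ≤ 2 * (1 + (d : ℝ) * (2 : ℝ) ^ (-C)) * |a k| * |t| ^ k := by
  obtain ⟨ht1, ht2⟩ := ht
  obtain ⟨hk3, hkd⟩ := Finset.mem_Icc.mp hk
  have hdpos : (0:ℝ) < d := by positivity
  have hL1 : 1 < lam := by
    rw [hlam]
    exact (Real.one_lt_rpow_iff_of_pos (by norm_num)).mpr (Or.inl ⟨by norm_num, by positivity⟩)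
  have hL0 : (0:ℝ) < lam := lt_trans one_pos hL1
  have hLd : lam ^ (d:ℤ) = 2 := by
    rw [hlam, zpow_natCast, ← Real.rpow_natCast, ← Real.rpow_mul (by norm_num)]
    rw [inv_mul_cancel₀ hdpos.ne', Real.rpow_one]
  have hT0 : 0 < |t| := lt_of_lt_of_le (zpow_pos hL0 _) ht1
  have hC0 : (0:ℝ) < (2:ℝ) ^ (-C) := Real.rpow_pos_of_pos (by norm_num) _
  -- per-term bound
  have key : ∀ j ∈ Finset.Icc 3 d, j ≠ k →
      |a j| * |t| ^ j ≤ 8 * ((2:ℝ) ^ (-C) * |a k|) * |t| ^ k := by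
    intro j hj hjk
    obtain ⟨hj3, hjd⟩ := Finset.mem_Icc.mp hj
    have h1 : |t| ^ j ≤ lam ^ ((j:ℤ) * l) * lam ^ (j:ℤ) := by
      calc |t| ^ j ≤ (lam ^ (l + 1)) ^ j := pow_le_pow_left₀ (abs_nonneg t) ht2 j
        _ = lam ^ ((l + 1) * (j:ℤ)) := by rw [← zpow_natCast (lam ^ (l+1)) j, ← zpow_mul]
        _ = lam ^ ((j:ℤ) * l + (j:ℤ)) := by congr 1; ring
        _ = lam ^ ((j:ℤ) * l) * lam ^ (j:ℤ) := zpow_add₀ hL0.ne' _ _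
    have h2 : lam ^ ((k:ℤ) * l) ≤ |t| ^ k * lam ^ (2 * (k:ℤ)) := by
      have hk2 : (lam ^ (l - 2)) ^ k ≤ |t| ^ k :=
        pow_le_pow_left₀ (zpow_pos hL0 _).le ht1 k
      calc lam ^ ((k:ℤ) * l) = lam ^ ((l - 2) * (k:ℤ) + 2 * (k:ℤ)) := by congr 1; ring
        _ = lam ^ ((l - 2) * (k:ℤ)) * lam ^ (2 * (k:ℤ)) := zpow_add₀ hL0.ne' _ _
        _ = (lam ^ (l - 2)) ^ k * lam ^ (2 * (k:ℤ)) := by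
            rw [zpow_mul, zpow_natCast]
        _ ≤ |t| ^ k * lam ^ (2 * (k:ℤ)) := by
            exact mul_le_mul_of_nonneg_right hk2 (zpow_pos hL0 _).le
    have h3 : lam ^ (2 * (k:ℤ) + (j:ℤ)) ≤ 8 := by
      calc lam ^ (2 * (k:ℤ) + (j:ℤ)) ≤ lam ^ (3 * (d:ℤ)) := by
            apply zpow_le_zpow_right₀ hL1.le
            omega
        _ = (lam ^ (d:ℤ)) ^ (3:ℕ) := by rw [← zpow_natCast (lam ^ (d:ℤ)) 3, ← zpow_mul]; congr 1; ring
        _ = 8 := by rw [hLd]; norm_num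
    calc |a j| * |t| ^ j ≤ |a j| * (lam ^ ((j:ℤ) * l) * lam ^ (j:ℤ)) :=
          mul_le_mul_of_nonneg_left h1 (abs_nonneg _)
      _ = (|a j| * lam ^ ((j:ℤ) * l)) * lam ^ (j:ℤ) := by ring
      _ ≤ ((2:ℝ) ^ (-C) * |a k| * lam ^ ((k:ℤ) * l)) * lam ^ (j:ℤ) :=
          mul_le_mul_of_nonneg_right (hdom j hj hjk) (zpow_pos hL0 _).le
      _ ≤ ((2:ℝ) ^ (-C) * |a k| * (|t| ^ k * lam ^ (2 * (k:ℤ)))) * lam ^ (j:ℤ) := by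
          have := mul_le_mul_of_nonneg_left h2 (mul_nonneg hC0.le (abs_nonneg (a k)))
          exact mul_le_mul_of_nonneg_right (by linarith [this]) (zpow_pos hL0 _).le
      _ = ((2:ℝ) ^ (-C) * |a k| * |t| ^ k) * lam ^ (2 * (k:ℤ) + (j:ℤ)) := by
          rw [zpow_add₀ hL0.ne']; ring
      _ ≤ ((2:ℝ) ^ (-C) * |a k| * |t| ^ k) * 8 := by
          apply mul_le_mul_of_nonneg_left h3
          positivity
      _ = 8 * ((2:ℝ) ^ (-C) * |a k|) * |t| ^ k := by ring
  -- sum bound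
  set M := |a k| * |t| ^ k with hM
  have hMpos : 0 < M := mul_pos (abs_pos.mpr hak) (pow_pos hT0 k)
  have hsum : |Q t - a k * t ^ k| ≤ (d:ℝ) * (8 * ((2:ℝ) ^ (-C) * |a k|) * |t| ^ k) := by
    have hQ' : Q t - a k * t ^ k = ∑ j ∈ (Finset.Icc 3 d).erase k, a j * t ^ j := by
      rw [hQ, ← Finset.add_sum_erase _ _ hk]; ring
    rw [hQ']
    calc |∑ j ∈ (Finset.Icc 3 d).erase k, a j * t ^ j|
        ≤ ∑ j ∈ (Finset.Icc 3 d).erase k, |a j * t ^ j| := Finset.abs_sum_le_sum_abs _ _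
      _ ≤ ∑ j ∈ (Finset.Icc 3 d).erase k, (8 * ((2:ℝ) ^ (-C) * |a k|) * |t| ^ k) := by
          apply Finset.sum_le_sum
          intro j hj
          rw [abs_mul, abs_pow]
          exact key j (Finset.mem_of_mem_erase hj) (Finset.ne_of_mem_erase hj)
      _ = ((Finset.Icc 3 d).erase k).card * (8 * ((2:ℝ) ^ (-C) * |a k|) * |t| ^ k) := by
          rw [Finset.sum_const, nsmul_eq_mul]
      _ ≤ (d:ℝ) * (8 * ((2:ℝ) ^ (-C) * |a k|) * |t| ^ k) := by
          apply mul_le_mul_of_nonneg_right _ (by positivity)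
          have : ((Finset.Icc 3 d).erase k).card ≤ d := by
            calc ((Finset.Icc 3 d).erase k).card ≤ (Finset.Icc 3 d).card :=
                  Finset.card_le_card (Finset.erase_subset _ _)
              _ = d - 2 := by rw [Nat.card_Icc]; omega
              _ ≤ d := by omega
          exact_mod_cast this
  -- smallness of x = d * 2^{-C}
  have hx : (d:ℝ) * (2:ℝ) ^ (-C) ≤ 1 / 16 := by
    have h1 : (2:ℝ) ^ (-C) ≤ (2:ℝ) ^ (-(10 * (d:ℝ))) :=
      Real.rpow_le_rpow_of_exponent_le (by norm_num) (by linarith)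
    have h2 : (2:ℝ) ^ (-(10 * (d:ℝ))) = ((2:ℝ) ^ (10 * d : ℕ))⁻¹ := by
      rw [Real.rpow_neg (by norm_num), ← Real.rpow_natCast]
      push_cast
      ring_nf
    have h3 : (16:ℝ) * d ≤ (2:ℝ) ^ (10 * d : ℕ) := by
      have : 16 * d ≤ 2 ^ (10 * d) := by
        calc 16 * d ≤ 16 * 2 ^ d := by
              have := @Nat.lt_two_pow_self d; omega
          _ = 2 ^ (d + 4) := by ring
          _ ≤ 2 ^ (10 * d) := Nat.pow_le_pow_right (by norm_num) (by omega)
      exact_mod_cast this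
    have hp : (0:ℝ) < (2:ℝ) ^ (10 * d : ℕ) := by positivity
    calc (d:ℝ) * (2:ℝ) ^ (-C) ≤ (d:ℝ) * ((2:ℝ) ^ (10 * d : ℕ))⁻¹ := by
          rw [← h2]; exact mul_le_mul_of_nonneg_left h1 hdpos.le
      _ ≤ ((2:ℝ) ^ (10 * d : ℕ) / 16) * ((2:ℝ) ^ (10 * d : ℕ))⁻¹ :=
          mul_le_mul_of_nonneg_right (by linarith) (inv_nonneg.mpr hp.le)
      _ = 1 / 16 := by field_simp
  have hlow : M - 8 * ((d:ℝ) * (2:ℝ) ^ (-C)) * M ≤ |Q t| := by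
    have h := abs_sub_abs_le_abs_sub (a k * t ^ k) (Q t)
    rw [abs_sub_comm] at h
    have habs : |a k * t ^ k| = M := by rw [abs_mul, abs_pow]
    nlinarith [hsum, h]
  have hhigh : |Q t| ≤ M + 8 * ((d:ℝ) * (2:ℝ) ^ (-C)) * M := by
    have h := abs_sub_abs_le_abs_sub (Q t) (a k * t ^ k)
    have habs : |a k * t ^ k| = M := by rw [abs_mul, abs_pow]
    nlinarith [hsum, h]
  constructor
  · calc (1 / 2) * (1 - (d : ℝ) * (2 : ℝ) ^ (-C)) * |a k| * |t| ^ k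
        = (1 / 2) * (1 - (d : ℝ) * (2 : ℝ) ^ (-C)) * M := by rw [hM]; ring
      _ ≤ M - 8 * ((d:ℝ) * (2:ℝ) ^ (-C)) * M := by nlinarith [hMpos, hx, hC0, hdpos]
      _ ≤ |Q t| := hlow
  · calc |Q t| ≤ M + 8 * ((d:ℝ) * (2:ℝ) ^ (-C)) * M := hhigh
      _ ≤ 2 * (1 + (d : ℝ) * (2 : ℝ) ^ (-C)) * M := by nlinarith [hMpos, hx, hC0, hdpos]
      _ = 2 * (1 + (d : ℝ) * (2 : ℝ) ^ (-C)) * |a k| * |t| ^ k := by rw [hM]; ring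
end

section
/- Let k ≥ 3 be an integer, λ = 2^{1/k}, let a ≠ 0 be real, let B ∈ ℤ satisfy λ^{−B} ≤ |a| ≤ λ^{−B+1}, and set θ = B/k. Let φ₀ : ℝ → [0,1] be supported in { s : λ^{−1} ≤ |s| ≤ λ² }, and let Q : ℝ → ℝ be measurable with |Q(t)| ≤ 8 |a| |t|^k for all t in the support of every φ₀(·/λ^i) with integer i ≤ θ. Then for every locally integrable f and every x ∈ ℝ, Σ_{i ∈ ℤ, i ≤ θ} ∫_ℝ |f(x−t)| |Q(t)| φ₀(t/λ^i) dt/|t| ≤ 10⁴ Mf(x). -/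
open MeasureTheory Complex
open scoped ENNReal NNReal

/-- The centered Hardy–Littlewood maximal function
`Mf(x) = sup_{r>0} (2r)⁻¹ ∫_{x-r}^{x+r} |f(y)| dy`, valued in `ℝ≥0∞`. -/
noncomputable def centeredMaximal (f : ℝ → ℂ) (x : ℝ) : ℝ≥0∞ :=
  ⨆ (r : ℝ) (_ : 0 < r),
    (ENNReal.ofReal (2 * r))⁻¹ * ∫⁻ y in Set.Icc (x - r) (x + r), (‖f y‖₊ : ℝ≥0∞)

/-!
At scale `λ^i` the kernel `|Q(t)| φ₀(t/λ^i) / |t|` lives on `λ^{i-1} ≤ |t| ≤ λ^{i+2}`, where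
`|Q(t)| ≤ 8|a| (λ^k)^{i+2} = 32 |a| 2^i`; so it is bounded by `32 |a| 2^i λ^{1-i}` on an interval of
length `2 λ^{i+2}`, and its contribution is at most `64 λ³ |a| 2^i · Mf(x)`. Summing the geometric
series over `i ≤ ⌊θ⌋` gives `128 λ³ |a| 2^{⌊θ⌋} Mf(x)`, and `|a| 2^{⌊θ⌋} ≤ |a| λ^B ≤ λ`;
as `λ ≤ λ³ ≤ λ^k = 2`, the total is at most `512 Mf(x)`.
-/

lemma lintegral_Icc_le_mul_centeredMaximal (f : ℝ → ℂ) (x : ℝ) {r : ℝ} (hr : 0 < r) :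
    ∫⁻ y in Set.Icc (x - r) (x + r), (‖f y‖₊ : ℝ≥0∞)
      ≤ ENNReal.ofReal (2 * r) * centeredMaximal f x := by
  have hM : (ENNReal.ofReal (2 * r))⁻¹ * ∫⁻ y in Set.Icc (x - r) (x + r), (‖f y‖₊ : ℝ≥0∞)
      ≤ centeredMaximal f x :=
    le_iSup₂ (f := fun (r : ℝ) (_ : 0 < r) =>
      (ENNReal.ofReal (2 * r))⁻¹ * ∫⁻ y in Set.Icc (x - r) (x + r), (‖f y‖₊ : ℝ≥0∞)) r hr
  rwa [ENNReal.inv_mul_le_iff (by simpa using hr) ENNReal.ofReal_ne_top] at hM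

lemma lintegral_mul_kernel_le_centeredMaximal (f : ℝ → ℂ) (x : ℝ) {K : ℝ → ℝ≥0∞} {C : ℝ≥0∞}
    (hC : C ≠ ∞) {r : ℝ} (hr : 0 < r) (hK : ∀ t, K t ≠ 0 → |t| ≤ r ∧ K t ≤ C) :
    ∫⁻ t, (‖f (x - t)‖₊ : ℝ≥0∞) * K t ≤ C * ENNReal.ofReal (2 * r) * centeredMaximal f x := by
  set g := Set.indicator (Set.Icc (x - r) (x + r)) (fun y => (‖f y‖₊ : ℝ≥0∞))
  have hpt : ∀ t, (‖f (x - t)‖₊ : ℝ≥0∞) * K t ≤ C * g (x - t) := by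
    intro t
    by_cases hKt : K t = 0
    · simp [hKt]
    obtain ⟨htr, hKC⟩ := hK t hKt
    have hmem : x - t ∈ Set.Icc (x - r) (x + r) := by
      constructor <;> linarith [abs_le.mp htr]
    simp only [g, Set.indicator_of_mem hmem]
    rw [mul_comm]
    gcongr
  calc ∫⁻ t, (‖f (x - t)‖₊ : ℝ≥0∞) * K t
      ≤ ∫⁻ t, C * g (x - t) := lintegral_mono hpt
    _ = C * ∫⁻ y in Set.Icc (x - r) (x + r), (‖f y‖₊ : ℝ≥0∞) := by
      rw [lintegral_const_mul' _ _ hC, lintegral_sub_left_eq_self g x,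
        lintegral_indicator measurableSet_Icc]
    _ ≤ C * ENNReal.ofReal (2 * r) * centeredMaximal f x := by
      rw [mul_assoc]; gcongr; exact lintegral_Icc_le_mul_centeredMaximal f x hr

lemma tsum_ofReal_two_zpow_ite_le (N : ℤ) :
    ∑' i : ℤ, (if i ≤ N then ENNReal.ofReal (2 ^ i) else 0) = 2 * ENNReal.ofReal (2 ^ N) := by
  have hinj : Function.Injective (fun n : ℕ => N - n) := fun m n h => by simpa using h
  have hsupp : Function.support (fun i : ℤ => if i ≤ N then ENNReal.ofReal (2 ^ i) else 0)
      ⊆ Set.range (fun n : ℕ => N - n) := by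
    intro i hi
    have : i ≤ N := by by_contra h; simp [h] at hi
    exact ⟨(N - i).toNat, show N - ((N - i).toNat : ℤ) = i by omega⟩
  rw [← hinj.tsum_eq hsupp]
  have hterm : ∀ n : ℕ, ENNReal.ofReal (2 ^ (N - n : ℤ)) = ENNReal.ofReal (2 ^ N) * 2⁻¹ ^ n := by
    intro n
    rw [zpow_sub₀ two_ne_zero, zpow_natCast, div_eq_mul_inv, ← inv_pow,
      ENNReal.ofReal_mul (by positivity), ENNReal.ofReal_pow (by norm_num),
      ENNReal.ofReal_inv_of_pos two_pos, ENNReal.ofReal_ofNat]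
  simp only [show ∀ n : ℕ, N - (n : ℤ) ≤ N from fun n => by omega, if_true, hterm,
    ENNReal.tsum_mul_left, ENNReal.tsum_geometric, ENNReal.one_sub_inv_two, inv_inv]
  rw [mul_comm]

lemma abs_bounds_of_ne_zero_div {lam : ℝ} {φ₀ : ℝ → ℝ}
    (hsupp : Function.support φ₀ ⊆ {s : ℝ | lam⁻¹ ≤ |s| ∧ |s| ≤ lam ^ 2})
    {c t : ℝ} (hc : 0 < c) (ht : φ₀ (t / c) ≠ 0) : c / lam ≤ |t| ∧ |t| ≤ c * lam ^ 2 := by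
  obtain ⟨hlo, hhi⟩ := hsupp ht
  rw [abs_div, abs_of_pos hc] at hlo hhi
  constructor
  · rw [div_eq_mul_inv, mul_comm]; exact (le_div_iff₀ hc).mp hlo
  · rw [mul_comm]; exact (div_le_iff₀ hc).mp hhi

lemma zpow_pow_eq_two_zpow {k : ℕ} {lam : ℝ} (hlamk : lam ^ k = 2) (i : ℤ) :
    (lam ^ i) ^ k = 2 ^ i := by
  rw [← zpow_natCast, ← zpow_mul, mul_comm, zpow_mul, zpow_natCast, hlamk]

lemma lintegral_kernel_scale_le_centeredMaximal {k : ℕ} {lam : ℝ} (hlam : 0 < lam)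
    (hlamk : lam ^ k = 2) {φ₀ : ℝ → ℝ} (hφ₀1 : ∀ s, φ₀ s ≤ 1)
    (hsupp : Function.support φ₀ ⊆ {s : ℝ | lam⁻¹ ≤ |s| ∧ |s| ≤ lam ^ 2})
    {Q : ℝ → ℝ} {a : ℝ} (i : ℤ)
    (hQ : ∀ t : ℝ, φ₀ (t / lam ^ i) ≠ 0 → |Q t| ≤ 8 * |a| * |t| ^ k) (f : ℝ → ℂ) (x : ℝ) :
    ∫⁻ t : ℝ, (‖f (x - t)‖₊ : ℝ≥0∞) * ENNReal.ofReal (|Q t|) *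
        ENNReal.ofReal (φ₀ (t / lam ^ i)) * (ENNReal.ofReal |t|)⁻¹
      ≤ ENNReal.ofReal (64 * lam ^ 3 * |a| * 2 ^ i) * centeredMaximal f x := by
  have hpi : 0 < lam ^ i := zpow_pos hlam i
  have hkernel : ∀ t, ENNReal.ofReal (|Q t|) * ENNReal.ofReal (φ₀ (t / lam ^ i)) *
      (ENNReal.ofReal |t|)⁻¹ ≠ 0 → |t| ≤ lam ^ i * lam ^ 2 ∧
      ENNReal.ofReal (|Q t|) * ENNReal.ofReal (φ₀ (t / lam ^ i)) * (ENNReal.ofReal |t|)⁻¹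
        ≤ ENNReal.ofReal (32 * |a| * 2 ^ i) * ENNReal.ofReal (lam / lam ^ i) := by
    intro t hK
    have hφ : φ₀ (t / lam ^ i) ≠ 0 := fun h => hK (by simp [h])
    obtain ⟨hlo, hhi⟩ := abs_bounds_of_ne_zero_div hsupp hpi hφ
    refine ⟨hhi, ?_⟩
    have hQt : |Q t| ≤ 32 * |a| * 2 ^ i := calc
      |Q t| ≤ 8 * |a| * |t| ^ k := hQ t hφ
      _ ≤ 8 * |a| * (lam ^ i * lam ^ 2) ^ k := by gcongr
      _ = 32 * |a| * 2 ^ i := by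
        rw [mul_pow, zpow_pow_eq_two_zpow hlamk, ← pow_mul, mul_comm 2 k, pow_mul, hlamk]
        ring
    have hinv : (ENNReal.ofReal |t|)⁻¹ ≤ ENNReal.ofReal (lam / lam ^ i) := by
      rw [← inv_div, ENNReal.ofReal_inv_of_pos (by positivity)]
      gcongr
    calc ENNReal.ofReal (|Q t|) * ENNReal.ofReal (φ₀ (t / lam ^ i)) * (ENNReal.ofReal |t|)⁻¹
        ≤ ENNReal.ofReal (32 * |a| * 2 ^ i) * 1 * ENNReal.ofReal (lam / lam ^ i) := by
          gcongr
          exact ENNReal.ofReal_le_one.mpr (hφ₀1 _)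
      _ = _ := by rw [mul_one]
  calc _ = ∫⁻ t : ℝ, (‖f (x - t)‖₊ : ℝ≥0∞) * (ENNReal.ofReal (|Q t|) *
        ENNReal.ofReal (φ₀ (t / lam ^ i)) * (ENNReal.ofReal |t|)⁻¹) := by
        simp only [mul_assoc]
    _ ≤ ENNReal.ofReal (32 * |a| * 2 ^ i) * ENNReal.ofReal (lam / lam ^ i) *
        ENNReal.ofReal (2 * (lam ^ i * lam ^ 2)) * centeredMaximal f x :=
      lintegral_mul_kernel_le_centeredMaximal f x (by finiteness) (by positivity) hkernel
    _ = ENNReal.ofReal (64 * lam ^ 3 * |a| * 2 ^ i) * centeredMaximal f x := by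
      rw [← ENNReal.ofReal_mul (by positivity), ← ENNReal.ofReal_mul (by positivity)]
      congr 2
      field_simp
      ring

lemma abs_mul_two_zpow_le {k : ℕ} {lam a : ℝ} (hlam : 1 ≤ lam) (hlamk : lam ^ k = 2) {B N : ℤ}
    (ha : |a| ≤ lam ^ (-B + 1)) (hN : N * k ≤ B) : |a| * 2 ^ N ≤ lam := calc
  |a| * 2 ^ N = |a| * lam ^ (N * k) := by
    rw [← zpow_pow_eq_two_zpow hlamk, ← zpow_natCast, ← zpow_mul]
  _ ≤ lam ^ (-B + 1) * lam ^ B := by gcongr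
  _ = lam := by rw [← zpow_add₀ (by positivity)]; simp

theorem statement9_general (k : ℕ) (hk : 3 ≤ k) (lam : ℝ) (hlam : lam = (2 : ℝ) ^ ((k : ℝ)⁻¹))
    (a : ℝ) (B : ℤ) (hB : lam ^ (-B) ≤ |a| ∧ |a| ≤ lam ^ (-B + 1))
    (θ : ℝ) (hθ : θ = (B : ℝ) / (k : ℝ))
    (φ₀ : ℝ → ℝ) (hφ₀01 : ∀ s, φ₀ s ∈ Set.Icc (0 : ℝ) 1)
    (hφ₀supp : Function.support φ₀ ⊆ {s : ℝ | lam⁻¹ ≤ |s| ∧ |s| ≤ lam ^ 2})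
    (Q : ℝ → ℝ)
    (hQ : ∀ i : ℤ, (i : ℝ) ≤ θ → ∀ t : ℝ, φ₀ (t / lam ^ i) ≠ 0 → |Q t| ≤ 8 * |a| * |t| ^ k)
    (f : ℝ → ℂ) (x : ℝ) :
    (∑' i : ℤ,
        if (i : ℝ) ≤ θ then
          ∫⁻ t : ℝ, (‖f (x - t)‖₊ : ℝ≥0∞) * ENNReal.ofReal (|Q t|) *
            ENNReal.ofReal (φ₀ (t / lam ^ i)) * (ENNReal.ofReal |t|)⁻¹
        else 0)
      ≤ 10 ^ 4 * centeredMaximal f x := by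
  have hk0 : (0 : ℝ) < k := by norm_cast; omega
  have hlam1 : 1 ≤ lam := hlam ▸ Real.one_le_rpow one_le_two (by positivity)
  have hlamk : lam ^ k = 2 := by
    rw [hlam, ← Real.rpow_natCast, ← Real.rpow_mul zero_le_two, inv_mul_cancel₀ hk0.ne',
      Real.rpow_one]
  have hlam3 : lam ^ 3 ≤ 2 := hlamk ▸ pow_le_pow_right₀ hlam1 hk
  have hN : ⌊θ⌋ * k ≤ B := by
    have h : (⌊θ⌋ : ℝ) * k ≤ B := by rw [← le_div_iff₀ hk0, ← hθ]; exact Int.floor_le θ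
    exact_mod_cast h
  set N := ⌊θ⌋
  set M := centeredMaximal f x
  have hscale : ∀ i : ℤ, (if (i : ℝ) ≤ θ then
        ∫⁻ t : ℝ, (‖f (x - t)‖₊ : ℝ≥0∞) * ENNReal.ofReal (|Q t|) *
          ENNReal.ofReal (φ₀ (t / lam ^ i)) * (ENNReal.ofReal |t|)⁻¹ else 0)
      ≤ ENNReal.ofReal (64 * lam ^ 3 * |a|) * M *
          (if i ≤ N then ENNReal.ofReal (2 ^ i) else 0) := by
    intro i
    by_cases hi : (i : ℝ) ≤ θ
    · rw [if_pos hi, if_pos (Int.le_floor.mpr hi), mul_right_comm,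
        ← ENNReal.ofReal_mul (by positivity)]
      exact lintegral_kernel_scale_le_centeredMaximal (by positivity) hlamk
        (fun s => (hφ₀01 s).2) hφ₀supp i (hQ i hi) f x
    · simp [hi]
  calc _ ≤ ∑' i : ℤ, ENNReal.ofReal (64 * lam ^ 3 * |a|) * M *
        (if i ≤ N then ENNReal.ofReal (2 ^ i) else 0) := ENNReal.tsum_le_tsum hscale
    _ = ENNReal.ofReal (128 * lam ^ 3 * (|a| * 2 ^ N)) * M := by
      rw [ENNReal.tsum_mul_left, tsum_ofReal_two_zpow_ite_le, mul_right_comm, ← mul_assoc,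
        mul_comm _ 2, ← ENNReal.ofReal_ofNat 2, ← ENNReal.ofReal_mul zero_le_two,
        ← ENNReal.ofReal_mul (by positivity)]
      congr 2
      ring
    _ ≤ ENNReal.ofReal (128 * 2 * 2) * M := by
      gcongr
      exact (abs_mul_two_zpow_le hlam1 hlamk hB.2 hN).trans
        ((le_self_pow₀ hlam1 (by norm_num)).trans hlam3)
    _ ≤ 10 ^ 4 * M := by
      gcongr
      rw [show (10 : ℝ≥0∞) ^ 4 = ENNReal.ofReal (10 ^ 4) by norm_num]
      exact ENNReal.ofReal_le_ofReal (by norm_num)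

/-- **Small scales error bound.** Let `k ≥ 3`, `λ = 2^{1/k}`, `a ≠ 0`, `B ∈ ℤ` with
`λ^{-B} ≤ |a| ≤ λ^{-B+1}`, `θ = B/k`. If `φ₀ : ℝ → [0,1]` is supported in
`{λ⁻¹ ≤ |s| ≤ λ²}` and `|Q(t)| ≤ 8|a||t|^k` on the support of every `φ₀(·/λ^i)` with `i ≤ θ`,
then `Σ_{i ≤ θ} ∫ |f(x-t)| |Q(t)| φ₀(t/λ^i) dt/|t| ≤ 10⁴ Mf(x)`. -/
theorem statement9 (k : ℕ) (hk : 3 ≤ k) (lam : ℝ) (hlam : lam = (2 : ℝ) ^ ((k : ℝ)⁻¹))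
    (a : ℝ) (ha : a ≠ 0) (B : ℤ) (hB : lam ^ (-B) ≤ |a| ∧ |a| ≤ lam ^ (-B + 1))
    (θ : ℝ) (hθ : θ = (B : ℝ) / (k : ℝ))
    (φ₀ : ℝ → ℝ) (hφ₀01 : ∀ s, φ₀ s ∈ Set.Icc (0 : ℝ) 1)
    (hφ₀supp : Function.support φ₀ ⊆ {s : ℝ | lam⁻¹ ≤ |s| ∧ |s| ≤ lam ^ 2})
    (Q : ℝ → ℝ) (hQmeas : Measurable Q)
    (hQ : ∀ i : ℤ, (i : ℝ) ≤ θ → ∀ t : ℝ, φ₀ (t / lam ^ i) ≠ 0 → |Q t| ≤ 8 * |a| * |t| ^ k)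
    (f : ℝ → ℂ) (hf : LocallyIntegrable f volume) (x : ℝ) :
    (∑' i : ℤ,
        if (i : ℝ) ≤ θ then
          ∫⁻ t : ℝ, (‖f (x - t)‖₊ : ℝ≥0∞) * ENNReal.ofReal (|Q t|) *
            ENNReal.ofReal (φ₀ (t / lam ^ i)) * (ENNReal.ofReal |t|)⁻¹
        else 0)
      ≤ 10 ^ 4 * centeredMaximal f x :=
  statement9_general k hk lam hlam a B hB θ hθ φ₀ hφ₀01 hφ₀supp Q hQ f x
end

section
/- Let α ∈ [3/2, 5/2], let n ≥ 1 be an integer, and set γ = (α(2^{α−1}−1))^{−1/2} 2^{(1−α/2)n}. Then for all u, v ∈ [2^{n−1}, 2^{n+2}] with |u − v| ≤ 20γ, one has α | u^{α−1} − v^{α−1} | ≤ 10⁵ γ^{−1}. -/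
set_option maxHeartbeats 1000000 in
/-- **Curvature contribution to the phase derivative is small across one packet.** For
`α ∈ [3/2,5/2]`, `n ≥ 1` and `γ = (α(2^{α-1}-1))^{-1/2} 2^{(1-α/2)n}`, any two points
`u, v ∈ [2^{n-1}, 2^{n+2}]` with `|u - v| ≤ 20γ` satisfy
`α |u^{α-1} - v^{α-1}| ≤ 10⁵ γ⁻¹`. -/
theorem statement15 (α : ℝ) (hα : α ∈ Set.Icc (3 / 2 : ℝ) (5 / 2))
    (n : ℕ) (hn : 1 ≤ n) (γ : ℝ)
    (hγ : γ = (α * ((2 : ℝ) ^ (α - 1) - 1)) ^ (-(1 / 2) : ℝ) * (2 : ℝ) ^ ((1 - α / 2) * n))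
    (u v : ℝ) (hu : u ∈ Set.Icc ((2 : ℝ) ^ (n - 1 : ℤ)) ((2 : ℝ) ^ (n + 2 : ℤ)))
    (hv : v ∈ Set.Icc ((2 : ℝ) ^ (n - 1 : ℤ)) ((2 : ℝ) ^ (n + 2 : ℤ)))
    (huv : |u - v| ≤ 20 * γ) :
    α * |u ^ (α - 1) - v ^ (α - 1)| ≤ 10 ^ 5 * γ⁻¹ := by
  obtain ⟨hα1, hα2⟩ := hα
  set a : ℝ := (2:ℝ) ^ (n - 1 : ℤ) with ha_def
  set b : ℝ := (2:ℝ) ^ (n + 2 : ℤ) with hb_def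
  have ha : (0:ℝ) < a := by positivity
  have hα0 : (0:ℝ) < α := by linarith
  have h2r : (1:ℝ) < (2:ℝ) ^ (α - 1) :=
    Real.one_lt_rpow_iff_of_pos (by norm_num) |>.2 (Or.inl ⟨one_lt_two, by linarith⟩)
  set c : ℝ := α * ((2:ℝ) ^ (α - 1) - 1) with hc_def
  have hc : 0 < c := by nlinarith
  have hγpos : 0 < γ := by
    rw [hγ]
    positivity
  set K : ℝ := (2:ℝ) ^ ((α - 2) * (n:ℝ) + 1) with hK_def
  have hKpos : 0 < K := Real.rpow_pos_of_pos two_pos _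
  -- express a and b as rpow
  have ha_rpow : a = (2:ℝ) ^ ((n:ℝ) - 1) := by
    rw [ha_def, ← Real.rpow_intCast 2 (n - 1)]
    push_cast
    ring_nf
  have hb_rpow : b = (2:ℝ) ^ ((n:ℝ) + 2) := by
    rw [hb_def, ← Real.rpow_intCast 2 (n + 2)]
    push_cast
    ring_nf
  -- bound on x ^ (α - 2) on [a, b]
  have hbound : ∀ x ∈ Set.Icc a b, x ^ (α - 2) ≤ K := by
    intro x hx
    have hxpos : 0 < x := lt_of_lt_of_le ha hx.1
    rcases le_total α 2 with h | h
    · have h1 : x ^ (α - 2) ≤ a ^ (α - 2) :=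
        Real.rpow_le_rpow_of_nonpos ha hx.1 (by linarith)
      have h2 : a ^ (α - 2) = (2:ℝ) ^ (((n:ℝ) - 1) * (α - 2)) := by
        rw [ha_rpow, ← Real.rpow_mul (by norm_num)]
      refine h1.trans ?_
      rw [h2, hK_def]
      apply Real.rpow_le_rpow_of_exponent_le one_le_two
      nlinarith
    · have h1 : x ^ (α - 2) ≤ b ^ (α - 2) :=
        Real.rpow_le_rpow hxpos.le hx.2 (by linarith)
      have h2 : b ^ (α - 2) = (2:ℝ) ^ (((n:ℝ) + 2) * (α - 2)) := by
        rw [hb_rpow, ← Real.rpow_mul (by norm_num)]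
      refine h1.trans ?_
      rw [h2, hK_def]
      apply Real.rpow_le_rpow_of_exponent_le one_le_two
      nlinarith
  -- mean value inequality
  have key : ∀ x ∈ Set.Icc a b,
      HasDerivWithinAt (fun y : ℝ => y ^ (α - 1)) ((α - 1) * x ^ (α - 2)) (Set.Icc a b) x := by
    intro x hx
    have hxpos : 0 < x := lt_of_lt_of_le ha hx.1
    have := (Real.hasDerivAt_rpow_const (p := α - 1) (Or.inl hxpos.ne')).hasDerivWithinAt
      (s := Set.Icc a b)
    rw [show α - 2 = α - 1 - 1 by ring]
    exact this
  have hmvt : ‖u ^ (α - 1) - v ^ (α - 1)‖ ≤ ((α - 1) * K) * ‖u - v‖ := by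
    refine (convex_Icc a b).norm_image_sub_le_of_norm_hasDerivWithin_le key ?_ hv hu
    intro x hx
    have hxpos : 0 < x := lt_of_lt_of_le ha hx.1
    rw [Real.norm_eq_abs, abs_of_nonneg (mul_nonneg (by linarith) (Real.rpow_nonneg hxpos.le _))]
    exact mul_le_mul_of_nonneg_left (hbound x hx) (by linarith)
  rw [Real.norm_eq_abs, Real.norm_eq_abs] at hmvt
  -- chain of inequalities
  have step1 : α * |u ^ (α - 1) - v ^ (α - 1)| ≤ α * ((α - 1) * K * (20 * γ)) := by
    apply mul_le_mul_of_nonneg_left _ hα0.le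
    refine hmvt.trans ?_
    exact mul_le_mul_of_nonneg_left huv (by nlinarith)
  refine step1.trans ?_
  rw [show (10:ℝ) ^ 5 * γ⁻¹ = 10 ^ 5 / γ by ring, le_div_iff₀ hγpos]
  -- compute K * γ²
  have e1 : (c ^ (-(1/2):ℝ)) * (c ^ (-(1/2):ℝ)) = c⁻¹ := by
    rw [← Real.rpow_add hc]
    norm_num [Real.rpow_neg_one]
  have e2 : ((2:ℝ) ^ ((1 - α/2) * (n:ℝ))) * ((2:ℝ) ^ ((1 - α/2) * (n:ℝ)))
      = (2:ℝ) ^ ((2 - α) * (n:ℝ)) := by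
    rw [← Real.rpow_add two_pos]
    congr 1
    ring
  have e3 : K * ((2:ℝ) ^ ((2 - α) * (n:ℝ))) = 2 := by
    rw [hK_def, ← Real.rpow_add two_pos]
    rw [show (α - 2) * (n:ℝ) + 1 + (2 - α) * (n:ℝ) = 1 by ring, Real.rpow_one]
  have hKγγ : K * (γ * γ) = 2 * c⁻¹ := by
    rw [hγ]
    calc K * ((c ^ (-(1/2):ℝ) * (2:ℝ) ^ ((1 - α/2) * (n:ℝ))) *
          (c ^ (-(1/2):ℝ) * (2:ℝ) ^ ((1 - α/2) * (n:ℝ))))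
        = (K * (((2:ℝ) ^ ((1 - α/2) * (n:ℝ))) * ((2:ℝ) ^ ((1 - α/2) * (n:ℝ))))) *
          ((c ^ (-(1/2):ℝ)) * (c ^ (-(1/2):ℝ))) := by ring
      _ = 2 * c⁻¹ := by rw [e1, e2, e3]
  have lhs_eq : α * ((α - 1) * K * (20 * γ)) * γ = 20 * α * (α - 1) * (K * (γ * γ)) := by ring
  rw [lhs_eq, hKγγ]
  -- final numeric bound
  have hs : Real.sqrt 2 ≤ (2:ℝ) ^ (α - 1) := by
    rw [show Real.sqrt 2 = (2:ℝ) ^ ((1:ℝ)/2) from Real.sqrt_eq_rpow 2]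
    exact Real.rpow_le_rpow_of_exponent_le one_le_two (by linarith)
  have hs2 : (1.4:ℝ) ≤ Real.sqrt 2 := by
    nlinarith [Real.sq_sqrt (show (0:ℝ) ≤ 2 by norm_num), Real.sqrt_nonneg 2]
  have hfrac : 20 * α * (α - 1) * (2 * c⁻¹) = (40 * α * (α - 1)) / c := by
    field_simp
    ring
  rw [hfrac, div_le_iff₀ hc]
  rw [hc_def]
  nlinarith [mul_le_mul_of_nonneg_left (show (0.4:ℝ) ≤ (2:ℝ) ^ (α - 1) - 1 by linarith) hα0.le]
end
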